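/- Let g(T) = 1 + 1/(0.0068 T² + 0.0008 T + 0.458). Then the function T ↦ g(T) is NOT convex on all of (0, ∞); specifically, there exist points 0 < T₁ < T₂ < 11 and λ ∈ (0,1) demonstrating that x ↦ log g(e^x) fails to be convex on (−∞, log 11). Equivalently, the second derivative of F(x) = log g(e^x) is negative at some x < log 11. -/

import Mathlib

/-! The points `T = 1, 3, 9` are equally spaced in `x = log T`, and `g(3)² > g(1) g(9)`, so `F`
violates midpoint convexity on `(−∞, log 11)`. Since `F` is smooth, a nonnegative second
derivative there would make it convex, so `F''` must be negative somewhere below `log 11`. -/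

noncomputable def CoP (T : ℝ) : ℝ := 0.0068 * T ^ 2 + 0.0008 * T + 0.458

noncomputable def gCoP (T : ℝ) : ℝ := 1 + 1 / CoP T

noncomputable def Fll (x : ℝ) : ℝ := Real.log (gCoP (Real.exp x))

open Real Set

theorem exists_deriv_deriv_neg_of_not_convexOn {D : Set ℝ} (hD : Convex ℝ D) {f : ℝ → ℝ}
    (hf : ContDiff ℝ 2 f) (hconv : ¬ ConvexOn ℝ D f) : ∃ x ∈ D, deriv (deriv f) x < 0 := by
  by_contra! hnonneg
  exact hconv <| convexOn_of_deriv2_nonneg' hD (hf.differentiable two_ne_zero).differentiableOn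
    hf.differentiable_deriv_two.differentiableOn hnonneg

lemma CoP_pos {T : ℝ} (hT : 0 ≤ T) : 0 < CoP T := by
  unfold CoP; positivity

lemma gCoP_pos {T : ℝ} (hT : 0 ≤ T) : 0 < gCoP T := by
  have := CoP_pos hT
  unfold gCoP; positivity

lemma contDiff_Fll : ContDiff ℝ 2 Fll := by
  have hCoP : ∀ x, CoP (exp x) ≠ 0 := fun x => (CoP_pos (exp_pos x).le).ne'
  have hg : ∀ x, gCoP (exp x) ≠ 0 := fun x => (gCoP_pos (exp_pos x).le).ne'
  have hCoP_smooth : ContDiff ℝ 2 fun x => CoP (exp x) := by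
    unfold CoP; fun_prop
  exact ((contDiff_const.add (contDiff_const.div hCoP_smooth hCoP)).log hg :)

lemma Fll_log {T : ℝ} (hT : 0 < T) : Fll (log T) = log (gCoP T) := by
  rw [Fll, exp_log hT]

lemma gCoP_one_mul_gCoP_nine_lt_sq : gCoP 1 * gCoP 9 < gCoP 3 ^ 2 := by
  norm_num [gCoP, CoP]

lemma not_convexOn_Fll : ¬ ConvexOn ℝ (Iio (log 11)) Fll := by
  intro hconv
  have h1 : log 1 ∈ Iio (log 11) := log_lt_log (by norm_num) (by norm_num)
  have h9 : log 9 ∈ Iio (log 11) := log_lt_log (by norm_num) (by norm_num)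
  have hmid : (1 / 2 : ℝ) • log 1 + (1 / 2 : ℝ) • log 9 = log 3 := by
    rw [show (9 : ℝ) = 3 ^ 2 by norm_num, log_pow, log_one, smul_eq_mul, smul_eq_mul]; ring
  have hle := hconv.2 h1 h9 (by norm_num : (0 : ℝ) ≤ 1 / 2) (by norm_num : (0 : ℝ) ≤ 1 / 2)
    (by norm_num)
  rw [hmid, Fll_log (by norm_num), Fll_log (by norm_num), Fll_log (by norm_num), smul_eq_mul,
    smul_eq_mul] at hle
  have hg1 : 0 < gCoP 1 := gCoP_pos zero_le_one
  have hg9 : 0 < gCoP 9 := gCoP_pos (by norm_num)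
  have hlog_lt : log (gCoP 1 * gCoP 9) < log (gCoP 3 ^ 2) :=
    log_lt_log (mul_pos hg1 hg9) gCoP_one_mul_gCoP_nine_lt_sq
  rw [log_pow, log_mul hg1.ne' hg9.ne'] at hlog_lt
  push_cast at hlog_lt
  linarith

/-- The log-log transform `F(x) = log g(eˣ)` of `g(T) = 1 + 1/CoP(T)` fails to be
convex on `(−∞, log 11)`; equivalently, its second derivative is negative at some
point below `log 11`. -/
theorem stmt18 :
    ¬ ConvexOn ℝ (Set.Iio (Real.log 11)) Fll ∧
    ∃ x : ℝ, x < Real.log 11 ∧ deriv (deriv Fll) x < 0 :=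
  ⟨not_convexOn_Fll, exists_deriv_deriv_neg_of_not_convexOn (convex_Iio _) contDiff_Fll
    not_convexOn_Fll⟩
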